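/- Let X be a Borel subset of a Polish metric space with the Prokhorov metric on 𝓜(X). For n ∈ ℕ, ε > 0 and μₙ a probability measure supported on at most n points, every extreme point of the closed Prokhorov ball B_ε(μₙ) = {μ ∈ 𝓜(X) : d_Pr(μ, μₙ) ≤ ε} is supported on at most n+2 points. -/

import Mathlib

open MeasureTheory

/-- An extreme point of a set of probability measures. -/
def IsExtremePt {Ω : Type*} [MeasurableSpace Ω]
    (C : Set (ProbabilityMeasure Ω)) (μ : ProbabilityMeasure Ω) : Prop :=
  μ ∈ C ∧ ∀ μ₁ ∈ C, ∀ μ₂ ∈ C, ∀ θ : ENNReal, 0 < θ → θ < 1 →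
    (μ : Measure Ω) = θ • (μ₁ : Measure Ω) + (1 - θ) • (μ₂ : Measure Ω) →
    μ₁ = μ ∧ μ₂ = μ

/-- `μ` is supported on at most `n` points. -/
def FinitelySupported {α : Type*} [MeasurableSpace α] (n : ℕ) (μ : Measure α) : Prop :=
  ∃ t : Finset α, t.card ≤ n ∧ μ ((↑t : Set α)ᶜ) = 0

/-- The Prokhorov distance
`d_Pr(μ₁,μ₂) = inf {ε > 0 : μ₁(A) ≤ μ₂(Aᵉ) + ε for all Borel A}`. -/
noncomputable def prokDist {X : Type*} [MetricSpace X] [MeasurableSpace X]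
    (μ₁ μ₂ : Measure X) : ℝ :=
  sInf {ε : ℝ | 0 < ε ∧ ∀ A : Set X, MeasurableSet A →
    μ₁ A ≤ μ₂ (Metric.thickening ε A) + ENNReal.ofReal ε}

/-!
For a centre `μn` carried by a finite set `t`, the closed Prokhorov ball of radius `ε` is the
polytope of probability measures `ν` with `ν {y | closePoints t ε y ⊆ S} ≤ μn S + ε` for all
`S ⊆ t`, where `closePoints t ε y` (the *type* of `y`) is the set of atoms within `ε` of `y`.

Let `μ` be an extreme point. If two disjoint sets of positive mass have equal conditional
probabilities on every tight constraint, moving a little mass between them yields two measures of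
the polytope with midpoint `μ`; so this cannot happen. Hence `μ` restricted to each type is
{0,1}-valued, thus (by second countability) a Dirac mass, and two types of positive mass are
separated by a tight constraint. Tight constraints are closed under union, and a positive type
covered by the union of two tight sets lies in one of them. Consequently the signature of a
nonempty positive type `T` (the tight sets containing it) is that of a single atom of `T`, so
there are at most `#t + 1` positive types, and `μ` has at most `#t + 1 ≤ n + 2` atoms.
-/

open ProbabilityTheory Filter Topology
open scoped ENNReal NNReal Finset

theorem FinitelySupported.mono {α : Type*} [MeasurableSpace α] {m n : ℕ} {μ : Measure α}
    (h : FinitelySupported m μ) (hmn : m ≤ n) : FinitelySupported n μ :=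
  let ⟨t, ht, htμ⟩ := h
  ⟨t, ht.trans hmn, htμ⟩

theorem finitelySupported_of_restrict_compl_singleton_eq_zero {Ω ι : Type*} [MeasurableSpace Ω]
    {μ : Measure Ω} {I : Finset ι} {R : ι → Set Ω} (hR : ∀ x, ∃ i ∈ I, x ∈ R i) {y : ι → Ω}
    (hy : ∀ i ∈ I, μ.restrict (R i) {y i}ᶜ = 0) :
    FinitelySupported #{i ∈ I | μ (R i) ≠ 0} μ := by
  classical
  refine ⟨{i ∈ I | μ (R i) ≠ 0}.image y, Finset.card_image_le, ?_⟩
  have hnull : ∀ i ∈ I, μ (R i ∩ (↑({i ∈ I | μ (R i) ≠ 0}.image y))ᶜ) = 0 := by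
    intro i hi
    by_cases hRi : μ (R i) = 0
    · exact measure_mono_null Set.inter_subset_left hRi
    · have hyi : μ ({y i}ᶜ ∩ R i) = 0 :=
        nonpos_iff_eq_zero.1 ((Measure.le_restrict_apply _ _).trans (hy i hi).le)
      refine measure_mono_null ?_ hyi
      rintro x ⟨hxR, hxF⟩
      refine ⟨fun hxy => hxF ?_, hxR⟩
      rw [Set.mem_singleton_iff.1 hxy]
      exact Finset.mem_image_of_mem y (Finset.mem_filter.2 ⟨hi, hRi⟩)
  refine measure_mono_null (fun x hx => ?_) ((measure_biUnion_null_iff I.countable_toSet).2 hnull)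
  obtain ⟨i, hi, hxi⟩ := hR x
  exact Set.mem_biUnion hi ⟨hxi, hx⟩

theorem exists_measure_compl_singleton_eq_zero {X : Type*} [TopologicalSpace X] [T2Space X]
    [HereditarilyLindelofSpace X] [MeasurableSpace X] [OpensMeasurableSpace X] [Nonempty X]
    {μ : Measure X} (h : ∀ s, MeasurableSet s → μ s = 0 ∨ μ sᶜ = 0) : ∃ y, μ {y}ᶜ = 0 := by
  rcases μ.support.eq_empty_or_nonempty with h0 | ⟨y, hy⟩
  · exact ⟨Classical.arbitrary X, by simp [Measure.support_eq_empty_iff.1 h0]⟩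
  refine ⟨y, measure_mono_null (Set.compl_subset_compl.2 fun z hz => ?_)
    Measure.measure_compl_support⟩
  by_contra hzy
  obtain ⟨U, V, hU, hV, hyU, hzV, hUV⟩ := t2_separation (Ne.symm hzy)
  have hμU := (Measure.mem_support_iff_forall y).1 hy U (hU.mem_nhds hyU)
  have hμV := (Measure.mem_support_iff_forall z).1 hz V (hV.mem_nhds hzV)
  rcases h U hU.measurableSet with hU0 | hU0
  · exact hμU.ne' hU0
  · exact hμV.ne' (measure_mono_null hUV.subset_compl_left hU0)

section UnionClosed

variable {α : Type*} [DecidableEq α] {𝒜 : Finset (Finset α)}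

theorem Finset.exists_mem_forall_mem_imp_subset_of_prime {T : Finset α} (hT : T.Nonempty)
    (h𝒜 : ∀ A ∈ 𝒜, ∀ B ∈ 𝒜, A ∪ B ∈ 𝒜)
    (hprime : ∀ A ∈ 𝒜, ∀ B ∈ 𝒜, T ⊆ A ∪ B → T ⊆ A ∨ T ⊆ B) :
    ∃ x ∈ T, ∀ A ∈ 𝒜, x ∈ A → T ⊆ A := by
  by_contra! h
  choose! A hA𝒜 hxA hTA using h
  obtain ⟨-, hTU⟩ : T.sup' hT A ∈ 𝒜 ∧ ¬T ⊆ T.sup' hT A :=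
    T.sup'_induction hT A (p := fun U => U ∈ 𝒜 ∧ ¬T ⊆ U)
      (fun U₁ h₁ U₂ h₂ => ⟨h𝒜 _ h₁.1 _ h₂.1, fun hT => (hprime _ h₁.1 _ h₂.1 hT).elim h₁.2 h₂.2⟩)
      fun x hx => ⟨hA𝒜 x hx, hTA x hx⟩
  exact hTU fun x hx => Finset.le_sup' A hx (hxA x hx)

theorem Finset.card_le_card_add_one_of_prime {t : Finset α} {𝒯 : Finset (Finset α)}
    (h𝒜 : ∀ A ∈ 𝒜, ∀ B ∈ 𝒜, A ∪ B ∈ 𝒜) (h𝒯 : ∀ T ∈ 𝒯, T ⊆ t)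
    (hprime : ∀ T ∈ 𝒯, ∀ A ∈ 𝒜, ∀ B ∈ 𝒜, T ⊆ A ∪ B → T ⊆ A ∨ T ⊆ B)
    (hsep : ∀ T₁ ∈ 𝒯, ∀ T₂ ∈ 𝒯, (∀ A ∈ 𝒜, T₁ ⊆ A ↔ T₂ ⊆ A) → T₁ = T₂) :
    #𝒯 ≤ #t + 1 := by
  have key : ∀ T ∈ 𝒯.erase ∅, ∃ x ∈ t, ∀ A ∈ 𝒜, T ⊆ A ↔ x ∈ A := by
    intro T hT
    obtain ⟨hTne, hT𝒯⟩ := Finset.mem_erase.1 hT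
    obtain ⟨x, hxT, hx⟩ := exists_mem_forall_mem_imp_subset_of_prime
      (Finset.nonempty_iff_ne_empty.2 hTne) h𝒜 (hprime T hT𝒯)
    exact ⟨x, h𝒯 T hT𝒯 hxT, fun A hA => ⟨fun h => h hxT, hx A hA⟩⟩
  have := Finset.card_le_card_of_forall_subsingleton (fun T x => ∀ A ∈ 𝒜, T ⊆ A ↔ x ∈ A) key
    fun _ _ T₁ h₁ T₂ h₂ => hsep T₁ (Finset.mem_of_mem_erase h₁.1) T₂ (Finset.mem_of_mem_erase h₂.1)
      fun A hA => (h₁.2 A hA).trans (h₂.2 A hA).symm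
  have := Finset.pred_card_le_card_erase (s := 𝒯) (a := ∅)
  omega

end UnionClosed

section Perturbation

variable {Ω : Type*} [MeasurableSpace Ω]

theorem smul_cond_le_smul {m : Measure Ω} {B : Set Ω} {c : ℝ≥0} {a : ℝ≥0∞} (hc : c ≤ a * m B) :
    c • m[|B] ≤ a • m := by
  refine Measure.le_iff.2 fun s hs => ?_
  rw [Measure.coe_nnreal_smul_apply, cond_apply' hs, Measure.smul_apply, smul_eq_mul,
    ← mul_assoc, ← div_eq_mul_inv]
  exact mul_le_mul' (ENNReal.div_le_of_le_mul hc) (measure_mono Set.inter_subset_right)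

theorem measure_eq_of_add_smul_eq_add_smul {ν m p q : Measure Ω} [IsFiniteMeasure q] {c : ℝ≥0}
    (h : ν + c • q = m + c • p) {s : Set Ω} (hs : p s = q s) : ν s = m s := by
  have := congrArg (· s) h
  simp only [Measure.add_apply, Measure.coe_nnreal_smul_apply, hs] at this
  exact (ENNReal.add_left_inj (ENNReal.mul_ne_top ENNReal.coe_ne_top (measure_ne_top q s))).1 this

theorem measure_le_of_add_smul_eq_add_smul {ν m p q : Measure Ω} [IsProbabilityMeasure p]
    {c : ℝ≥0} (h : ν + c • q = m + c • p) (s : Set Ω) : ν s ≤ m s + c := by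
  calc ν s ≤ (ν + c • q) s := by simp
    _ = m s + c * p s := by rw [h]; simp
    _ ≤ m s + c := by gcongr; exact mul_le_of_le_one_right' prob_le_one

theorem isProbabilityMeasure_and_le_of_add_smul_eq_add_smul {ι : Type*} {I : Finset ι}
    {G : ι → Set Ω} {b : ι → ℝ≥0∞} {ν m p q : Measure Ω} [IsProbabilityMeasure m]
    [IsProbabilityMeasure p] [IsProbabilityMeasure q] {c : ℝ≥0} (h : ν + c • q = m + c • p)
    (hm : ∀ i ∈ I, m (G i) ≤ b i) (hslack : ∀ i ∈ I, m (G i) ≠ b i → c ≤ b i - m (G i))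
    (htight : ∀ i ∈ I, m (G i) = b i → p (G i) = q (G i)) :
    IsProbabilityMeasure ν ∧ ∀ i ∈ I, ν (G i) ≤ b i := by
  refine ⟨⟨(measure_eq_of_add_smul_eq_add_smul h (by simp)).trans measure_univ⟩, fun i hi => ?_⟩
  by_cases hi' : m (G i) = b i
  · exact (measure_eq_of_add_smul_eq_add_smul h (htight i hi hi')).trans_le (hm i hi)
  · calc ν (G i) ≤ m (G i) + c := measure_le_of_add_smul_eq_add_smul h _
      _ ≤ m (G i) + (b i - m (G i)) := by gcongr; exact hslack i hi hi'
      _ = b i := add_tsub_cancel_of_le (hm i hi)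

theorem ENNReal.eventually_coe_le {a : ℝ≥0∞} (ha : 0 < a) :
    ∀ᶠ c : ℝ≥0 in 𝓝[>] 0, (c : ℝ≥0∞) ≤ a :=
  nhdsWithin_le_nhds <| (ENNReal.continuous_coe.tendsto 0).eventually
    (eventually_le_nhds (by simpa using ha))

theorem IsExtremePt.eq_of_add_eq_add {C : Set (ProbabilityMeasure Ω)}
    {μ ν₁ ν₂ : ProbabilityMeasure Ω} (hμ : IsExtremePt C μ) (h₁ : ν₁ ∈ C) (h₂ : ν₂ ∈ C)
    (h : (ν₁ : Measure Ω) + ν₂ = μ + μ) : ν₁ = μ := by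
  refine (hμ.2 ν₁ h₁ ν₂ h₂ 2⁻¹ (ENNReal.inv_pos.2 ENNReal.ofNat_ne_top)
    (ENNReal.inv_lt_one.2 ENNReal.one_lt_two) ?_).1
  rw [ENNReal.one_sub_inv_two, ← smul_add, h, ← two_smul ℝ≥0∞, smul_smul,
    ENNReal.inv_mul_cancel two_ne_zero ENNReal.ofNat_ne_top, one_smul]

theorem IsExtremePt.cond_eq_of_forall_tight {ι : Type*} {I : Finset ι} {G : ι → Set Ω}
    {b : ι → ℝ≥0∞} {μ : ProbabilityMeasure Ω}
    (hμ : IsExtremePt {ν : ProbabilityMeasure Ω | ∀ i ∈ I, (ν : Measure Ω) (G i) ≤ b i} μ)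
    {B₁ B₂ : Set Ω} (h₁ : (μ : Measure Ω) B₁ ≠ 0) (h₂ : (μ : Measure Ω) B₂ ≠ 0)
    (hG : ∀ i ∈ I, (μ : Measure Ω) (G i) = b i →
      (μ : Measure Ω)[G i|B₁] = (μ : Measure Ω)[G i|B₂]) :
    (μ : Measure Ω)[|B₁] = (μ : Measure Ω)[|B₂] := by
  set m : Measure Ω := (μ : Measure Ω)
  have hslack : ∀ᶠ c : ℝ≥0 in 𝓝[>] 0, ∀ i ∈ I, m (G i) ≠ b i → (c : ℝ≥0∞) ≤ b i - m (G i) := by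
    refine (eventually_all_finset I).2 fun i hi => ?_
    by_cases hi' : m (G i) = b i
    · exact .of_forall fun _ h => (h hi').elim
    · exact (ENNReal.eventually_coe_le (tsub_pos_of_lt ((hμ.1 i hi).lt_of_ne hi'))).mono
        fun _ hc _ => hc
  obtain ⟨c, hc₁, hc₂, hcI, hc0⟩ :=
    ((ENNReal.eventually_coe_le (a := 2⁻¹ * m B₁) (by simp [pos_iff_ne_zero, h₁])).and
      ((ENNReal.eventually_coe_le (a := 2⁻¹ * m B₂) (by simp [pos_iff_ne_zero, h₂])).and
        (hslack.and self_mem_nhdsWithin))).exists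
  have := cond_isProbabilityMeasure h₁
  have := cond_isProbabilityMeasure h₂
  set p₁ := m[|B₁]
  set p₂ := m[|B₂]
  -- `m = m₀ + c p₁ + c p₂`; moving the mass `c` from one conditional part to the other
  -- gives two measures of the polytope with midpoint `m`.
  have hle : c • p₁ + c • p₂ ≤ m :=
    calc c • p₁ + c • p₂ ≤ (2⁻¹ : ℝ≥0∞) • m + (2⁻¹ : ℝ≥0∞) • m :=
          add_le_add (smul_cond_le_smul hc₁) (smul_cond_le_smul hc₂)
      _ = m := by rw [← add_smul, ENNReal.inv_two_add_inv_two, one_smul]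
  set m₀ := m - (c • p₁ + c • p₂)
  have hm : m₀ + (c • p₁ + c • p₂) = m := Measure.sub_add_cancel_of_le hle
  have hν₁ : m₀ + (c • p₁ + c • p₁) + c • p₂ = m + c • p₁ := by rw [← hm]; abel
  have hν₂ : m₀ + (c • p₂ + c • p₂) + c • p₁ = m + c • p₂ := by rw [← hm]; abel
  have hsum : m₀ + (c • p₁ + c • p₁) + (m₀ + (c • p₂ + c • p₂)) = m + m := by rw [← hm]; abel
  obtain ⟨hν₁p, hν₁I⟩ := isProbabilityMeasure_and_le_of_add_smul_eq_add_smul hν₁ hμ.1 hcI hG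
  obtain ⟨hν₂p, hν₂I⟩ := isProbabilityMeasure_and_le_of_add_smul_eq_add_smul hν₂ hμ.1 hcI
    fun i hi h => (hG i hi h).symm
  have hν₁m : m₀ + (c • p₁ + c • p₁) = m := congrArg Subtype.val
    (hμ.eq_of_add_eq_add (ν₁ := ⟨_, hν₁p⟩) (ν₂ := ⟨_, hν₂p⟩) hν₁I hν₂I hsum)
  rw [hν₁m] at hν₁
  ext s
  have := congrArg (· s) hν₁
  simp only [Measure.add_apply, Measure.coe_nnreal_smul_apply] at this
  have hc : (c : ℝ≥0∞) ≠ 0 := by simpa using hc0.ne'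
  exact ((ENNReal.mul_right_inj hc ENNReal.coe_ne_top).1
    ((ENNReal.add_right_inj (measure_ne_top m s)).1 this)).symm

theorem IsExtremePt.measure_eq_zero_or_of_forall_tight {ι : Type*} {I : Finset ι}
    {G : ι → Set Ω} {b : ι → ℝ≥0∞} {μ : ProbabilityMeasure Ω}
    (hμ : IsExtremePt {ν : ProbabilityMeasure Ω | ∀ i ∈ I, (ν : Measure Ω) (G i) ≤ b i} μ)
    {B₁ B₂ : Set Ω} (hB₁ : MeasurableSet B₁) (hB₂ : MeasurableSet B₂) (hd : Disjoint B₁ B₂)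
    (hG : ∀ i ∈ I, (μ : Measure Ω) (G i) = b i →
      (B₁ ⊆ G i ∧ B₂ ⊆ G i) ∨ (Disjoint B₁ (G i) ∧ Disjoint B₂ (G i))) :
    (μ : Measure Ω) B₁ = 0 ∨ (μ : Measure Ω) B₂ = 0 := by
  by_contra! h
  have hcond := hμ.cond_eq_of_forall_tight h.1 h.2 fun i hi hti => by
    rcases hG i hi hti with ⟨hs₁, hs₂⟩ | ⟨hd₁, hd₂⟩
    · rw [cond_apply hB₁, cond_apply hB₂, Set.inter_eq_left.2 hs₁, Set.inter_eq_left.2 hs₂,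
        ENNReal.inv_mul_cancel h.1 (measure_ne_top _ _),
        ENNReal.inv_mul_cancel h.2 (measure_ne_top _ _)]
    · rw [cond_apply hB₁, cond_apply hB₂, Set.disjoint_iff_inter_eq_empty.1 hd₁,
        Set.disjoint_iff_inter_eq_empty.1 hd₂, measure_empty, mul_zero, mul_zero]
  have := congrArg (· B₁) hcond
  simp [cond_apply hB₂, Set.disjoint_iff_inter_eq_empty.1 hd.symm, h.1] at this

end Perturbation

section Prokhorov

open Metric

variable {X : Type*} [MetricSpace X]

noncomputable def closePoints (t : Finset X) (r : ℝ) (y : X) : Finset X :=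
  {x ∈ t | dist y x ≤ r}

theorem closePoints_subset (t : Finset X) (r : ℝ) (y : X) : closePoints t r y ⊆ t :=
  Finset.filter_subset _ _

theorem closePoints_mono {t : Finset X} {r r' : ℝ} (h : r ≤ r') (y : X) :
    closePoints t r y ⊆ closePoints t r' y :=
  Finset.monotone_filter_right _ fun _ _ hx => hx.trans h

theorem isOpen_setOf_closePoints_subset (t S : Finset X) (r : ℝ) :
    IsOpen {y | closePoints t r y ⊆ S} := by
  classical
  have : {y | closePoints t r y ⊆ S} = ⋂ x ∈ t \ S, {y | r < dist y x} := by
    ext y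
    simp only [Set.mem_ofPred_eq, Set.mem_iInter, Finset.mem_sdiff]
    refine ⟨fun h x ⟨hxt, hxS⟩ => not_le.1 fun hd => hxS (h ?_), fun h x hx => ?_⟩
    · exact Finset.mem_filter.2 ⟨hxt, hd⟩
    · obtain ⟨hxt, hd⟩ := Finset.mem_filter.1 hx
      exact not_not.1 fun hxS => (h x ⟨hxt, hxS⟩).not_ge hd
  rw [this]
  exact isOpen_biInter_finset fun x _ =>
    isOpen_lt continuous_const (continuous_id.dist continuous_const)

variable [MeasurableSpace X]

theorem prokDist_le_iff {ν μ : Measure X} [IsFiniteMeasure ν] {ε : ℝ} (hε : 0 ≤ ε) :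
    prokDist ν μ ≤ ε ↔
      ∀ δ > ε, ∀ A, MeasurableSet A → ν A ≤ μ (thickening δ A) + ENNReal.ofReal δ := by
  set P := {δ : ℝ | 0 < δ ∧ ∀ A : Set X, MeasurableSet A →
    ν A ≤ μ (thickening δ A) + ENNReal.ofReal δ}
  have hP : ∀ δ ∈ P, ∀ δ' ≥ δ, δ' ∈ P := fun δ hδ δ' hδδ' =>
    ⟨hδ.1.trans_le hδδ', fun A hA => (hδ.2 A hA).trans (by gcongr)⟩
  have hPne : P.Nonempty := by
    refine ⟨ν.real Set.univ + 1, by positivity, fun A _ => le_add_left ?_⟩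
    calc ν A ≤ ν Set.univ := measure_mono (Set.subset_univ A)
      _ ≤ ENNReal.ofReal (ν.real Set.univ + 1) := by
        rw [← ofReal_measureReal]; gcongr; linarith
  refine ⟨fun h δ hδ => ?_, fun h => le_of_forall_gt_imp_ge_of_dense fun δ hδ =>
    csInf_le ⟨0, fun _ h => h.1.le⟩ ⟨hε.trans_lt hδ, h δ hδ⟩⟩
  · obtain ⟨δ', hδ'P, hδ'δ⟩ := exists_lt_of_csInf_lt hPne (h.trans_lt hδ)
    exact (hP δ' hδ'P δ hδ'δ.le).2

def prokhorovPolytope (μ : Measure X) (t : Finset X) (ε : ℝ) : Set (ProbabilityMeasure X) :=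
  {ν | ∀ S ∈ t.powerset, (ν : Measure X) {y | closePoints t ε y ⊆ S} ≤ μ S + ENNReal.ofReal ε}

theorem IsExtremePt.measure_eq_zero_or_of_subset_preimage {μn : Measure X} {t : Finset X}
    {ε : ℝ} {μ : ProbabilityMeasure X} (hμ : IsExtremePt (prokhorovPolytope μn t ε) μ)
    {T₁ T₂ : Finset X} {B₁ B₂ : Set X}
    (hB₁ : MeasurableSet B₁) (hB₂ : MeasurableSet B₂) (hd : Disjoint B₁ B₂)
    (hBT₁ : B₁ ⊆ closePoints t ε ⁻¹' {T₁}) (hBT₂ : B₂ ⊆ closePoints t ε ⁻¹' {T₂})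
    (hT : ∀ S ∈ t.powerset,
      (μ : Measure X) {y | closePoints t ε y ⊆ S} = μn S + ENNReal.ofReal ε →
        (T₁ ⊆ S ↔ T₂ ⊆ S)) :
    (μ : Measure X) B₁ = 0 ∨ (μ : Measure X) B₂ = 0 := by
  refine hμ.measure_eq_zero_or_of_forall_tight hB₁ hB₂ hd fun S hS htight => ?_
  have hTS := hT S hS htight
  have hy₁ : ∀ y ∈ B₁, closePoints t ε y = T₁ := fun y hy => hBT₁ hy
  have hy₂ : ∀ y ∈ B₂, closePoints t ε y = T₂ := fun y hy => hBT₂ hy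
  by_cases h : T₁ ⊆ S
  · exact Or.inl ⟨fun y hy => show _ ⊆ S from hy₁ y hy ▸ h,
      fun y hy => show _ ⊆ S from hy₂ y hy ▸ hTS.1 h⟩
  · exact Or.inr ⟨Set.disjoint_left.2 fun y hy (hyS : _ ⊆ S) => h (hy₁ y hy ▸ hyS),
      Set.disjoint_left.2 fun y hy (hyS : _ ⊆ S) => h (hTS.2 (hy₂ y hy ▸ hyS))⟩

variable [OpensMeasurableSpace X]

theorem measurableSet_closePoints_preimage_singleton (t T : Finset X) (r : ℝ) :
    MeasurableSet (closePoints t r ⁻¹' {T}) := by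
  classical
  have : closePoints t r ⁻¹' {T} =
      {y | closePoints t r y ⊆ T} \ ⋃ x ∈ T, {y | closePoints t r y ⊆ T.erase x} := by
    ext y
    simp only [Set.mem_preimage, Set.mem_singleton_iff, Set.mem_sdiff, Set.mem_ofPred_eq,
      Set.mem_iUnion, exists_prop, ← Finset.ssubset_iff_exists_subset_erase]
    exact ⟨fun h => ⟨h.le, h.not_lt⟩, fun h => eq_of_le_of_not_lt h.1 h.2⟩
  rw [this]
  exact (isOpen_setOf_closePoints_subset t T r).measurableSet.diff
    (.biUnion T.countable_toSet fun x _ => (isOpen_setOf_closePoints_subset _ _ r).measurableSet)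

theorem measure_setOf_closePoints_subset_le {ν μ : Measure X} {t : Finset X} {ε : ℝ}
    (ht : μ (↑t)ᶜ = 0)
    (h : ∀ δ > ε, ∀ A, MeasurableSet A → ν A ≤ μ (thickening δ A) + ENNReal.ofReal δ)
    (S : Finset X) : ν {y | closePoints t ε y ⊆ S} ≤ μ S + ENNReal.ofReal ε := by
  have hthick : ∀ {δ r}, δ ≤ r → thickening δ {y | closePoints t r y ⊆ S} ⊆ S ∪ (↑t)ᶜ := by
    intro δ r hδr x hx
    obtain ⟨z, hz, hxz⟩ := mem_thickening_iff.1 hx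
    by_cases hxt : x ∈ t
    · exact Or.inl (hz (Finset.mem_filter.2 ⟨hxt, (dist_comm z x ▸ hxz.le).trans hδr⟩))
    · exact Or.inr hxt
  have hr : ∀ r : Set.Ioi ε, ν {y | closePoints t r y ⊆ S} ≤ μ S + ENNReal.ofReal ε := by
    rintro ⟨r, hr⟩
    refine ge_of_tendsto (tendsto_const_nhds.add
      ((ENNReal.continuous_ofReal.tendsto ε).mono_left nhdsWithin_le_nhds))
      (eventually_of_mem (Ioc_mem_nhdsGT hr) fun δ ⟨hεδ, hδr⟩ => ?_)
    calc ν _ ≤ μ (thickening δ {y | closePoints t r y ⊆ S}) + ENNReal.ofReal δ :=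
          h δ hεδ _ (isOpen_setOf_closePoints_subset t S r).measurableSet
      _ ≤ μ (S ∪ (↑t)ᶜ) + ENNReal.ofReal δ := by gcongr; exact hthick hδr
      _ ≤ μ S + ENNReal.ofReal δ := by grw [measure_union_le, ht, add_zero]
  have hcover : {y | closePoints t ε y ⊆ S} ⊆ ⋃ r : Set.Ioi ε, {y | closePoints t r y ⊆ S} := by
    intro y hy
    have hfar : ∀ᶠ r in 𝓝[>] ε, ∀ x ∈ t, x ∉ S → r < dist y x := by
      refine (eventually_all_finset t).2 fun x hxt => ?_
      by_cases hxS : x ∈ S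
      · exact .of_forall fun _ h => (h hxS).elim
      · have hd : ε < dist y x := not_le.1 fun hd => hxS (hy (Finset.mem_filter.2 ⟨hxt, hd⟩))
        exact ((gt_mem_nhds hd).filter_mono nhdsWithin_le_nhds).mono fun _ h _ => h
    obtain ⟨r, hr, hεr⟩ := (hfar.and self_mem_nhdsWithin).exists
    refine Set.mem_iUnion.2 ⟨⟨r, hεr⟩, fun x hx => ?_⟩
    obtain ⟨hxt, hd⟩ := Finset.mem_filter.1 hx
    exact not_not.1 fun hxS => (hr x hxt hxS).not_ge hd
  calc ν {y | closePoints t ε y ⊆ S} ≤ ν (⋃ r : Set.Ioi ε, {y | closePoints t r y ⊆ S}) :=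
        measure_mono hcover
    _ = ⨆ r : Set.Ioi ε, ν {y | closePoints t r y ⊆ S} :=
        Antitone.measure_iUnion fun r r' h y hy => (closePoints_mono h y).trans hy
    _ ≤ μ S + ENNReal.ofReal ε := iSup_le hr

theorem prokDist_le_iff_forall_closePoints_subset {ν μ : Measure X} [IsFiniteMeasure ν]
    {t : Finset X} (ht : μ (↑t)ᶜ = 0) {ε : ℝ} (hε : 0 ≤ ε) :
    prokDist ν μ ≤ ε ↔
      ∀ S ∈ t.powerset, ν {y | closePoints t ε y ⊆ S} ≤ μ S + ENNReal.ofReal ε := by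
  classical
  rw [prokDist_le_iff hε]
  refine ⟨fun h S _ => measure_setOf_closePoints_subset_le ht h S, fun h δ hδ A _ => ?_⟩
  set S := {x ∈ t | x ∈ thickening δ A}
  calc ν A ≤ ν {y | closePoints t ε y ⊆ S} := measure_mono fun y hy x hx => ?_
    _ ≤ μ S + ENNReal.ofReal ε := h S (Finset.mem_powerset.2 (Finset.filter_subset _ _))
    _ ≤ μ (thickening δ A) + ENNReal.ofReal δ := by
      gcongr
      exact fun x hx => (Finset.mem_filter.1 hx).2
  obtain ⟨hxt, hyx⟩ := Finset.mem_filter.1 hx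
  exact Finset.mem_filter.2 ⟨hxt, mem_thickening_iff.2 ⟨y, hy, dist_comm x y ▸ hyx.trans_lt hδ⟩⟩

theorem setOf_prokDist_le_eq_prokhorovPolytope {μ : Measure X} {t : Finset X}
    (ht : μ (↑t)ᶜ = 0) {ε : ℝ} (hε : 0 ≤ ε) :
    {ν : ProbabilityMeasure X | prokDist ν μ ≤ ε} = prokhorovPolytope μ t ε :=
  Set.ext fun _ => prokDist_le_iff_forall_closePoints_subset ht hε

theorem measure_setOf_closePoints_subset_union [DecidableEq X] {ν μ : Measure X}
    [IsFiniteMeasure ν] [IsFiniteMeasure μ] {t S₁ S₂ : Finset X} {ε : ℝ}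
    (hν : ∀ S ∈ t.powerset, ν {y | closePoints t ε y ⊆ S} ≤ μ S + ENNReal.ofReal ε)
    (hS₁ : S₁ ⊆ t) (hS₂ : S₂ ⊆ t)
    (h₁ : ν {y | closePoints t ε y ⊆ S₁} = μ S₁ + ENNReal.ofReal ε)
    (h₂ : ν {y | closePoints t ε y ⊆ S₂} = μ S₂ + ENNReal.ofReal ε) :
    ν {y | closePoints t ε y ⊆ S₁ ∪ S₂} = μ ↑(S₁ ∪ S₂) + ENNReal.ofReal ε ∧
      ν ({y | closePoints t ε y ⊆ S₁ ∪ S₂} \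
        ({y | closePoints t ε y ⊆ S₁} ∪ {y | closePoints t ε y ⊆ S₂})) = 0 := by
  set G : Finset X → Set X := fun S => {y | closePoints t ε y ⊆ S}
  have hG : ∀ S, MeasurableSet (G S) := fun S =>
    (isOpen_setOf_closePoints_subset t S ε).measurableSet
  have hinter : G S₁ ∩ G S₂ = G (S₁ ∩ S₂) := by
    ext y
    exact Finset.subset_inter_iff.symm
  have hunion : G S₁ ∪ G S₂ ⊆ G (S₁ ∪ S₂) :=
    Set.union_subset (fun y hy => hy.trans Finset.subset_union_left)
      fun y hy => hy.trans Finset.subset_union_right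
  -- the left side is supermodular in `S`, the right side modular, so tightness passes to `∪`
  have hsum : ν (G S₁ ∪ G S₂) + ν (G (S₁ ∩ S₂)) =
      (μ ↑(S₁ ∪ S₂) + ENNReal.ofReal ε) + (μ ↑(S₁ ∩ S₂) + ENNReal.ofReal ε) := by
    rw [← hinter, measure_union_add_inter _ (hG S₂), h₁, h₂, Finset.coe_union, Finset.coe_inter,
      add_add_add_comm, ← measure_union_add_inter _ S₂.measurableSet, add_add_add_comm]
  have hle_union := hν (S₁ ∪ S₂) (Finset.mem_powerset.2 (Finset.union_subset hS₁ hS₂))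
  have hle_inter := hν (S₁ ∩ S₂) (Finset.mem_powerset.2 (Finset.inter_subset_left.trans hS₁))
  have hU : ν (G S₁ ∪ G S₂) = μ ↑(S₁ ∪ S₂) + ENNReal.ofReal ε :=
    le_antisymm ((measure_mono hunion).trans hle_union) <| not_lt.1 fun hlt =>
      (ENNReal.add_lt_add_of_lt_of_le (measure_ne_top _ _) hlt hle_inter).ne hsum
  have hGU : ν (G (S₁ ∪ S₂)) = μ ↑(S₁ ∪ S₂) + ENNReal.ofReal ε :=
    le_antisymm hle_union (hU ▸ measure_mono hunion)
  refine ⟨hGU, ?_⟩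
  rw [measure_sdiff hunion ((hG _).union (hG _)).nullMeasurableSet (measure_ne_top _ _), hGU, hU,
    tsub_self]

variable {μn : Measure X} {t : Finset X} {ε : ℝ} {μ : ProbabilityMeasure X}

theorem IsExtremePt.exists_restrict_compl_singleton_eq_zero [SecondCountableTopology X]
    (hμ : IsExtremePt (prokhorovPolytope μn t ε) μ) (T : Finset X) :
    ∃ y, (μ : Measure X).restrict (closePoints t ε ⁻¹' {T}) {y}ᶜ = 0 := by
  have := μ.nonempty
  have hR := measurableSet_closePoints_preimage_singleton t T ε
  refine exists_measure_compl_singleton_eq_zero fun B hB => ?_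
  rw [Measure.restrict_apply hB, Measure.restrict_apply hB.compl]
  exact hμ.measure_eq_zero_or_of_subset_preimage (hB.inter hR) (hB.compl.inter hR)
    (disjoint_compl_right.mono Set.inter_subset_left Set.inter_subset_left)
    Set.inter_subset_right Set.inter_subset_right fun _ _ _ => Iff.rfl

open Classical in
theorem IsExtremePt.card_filter_measure_preimage_ne_zero_le [IsFiniteMeasure μn]
    (hμ : IsExtremePt (prokhorovPolytope μn t ε) μ) :
    #{T ∈ t.powerset | (μ : Measure X) (closePoints t ε ⁻¹' {T}) ≠ 0} ≤ #t + 1 := by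
  set 𝒜 := {S ∈ t.powerset | (μ : Measure X) {y | closePoints t ε y ⊆ S} = μn S + ENNReal.ofReal ε}
  have htight : ∀ {S₁ S₂}, S₁ ∈ 𝒜 → S₂ ∈ 𝒜 → _ := fun {S₁ S₂} h₁ h₂ =>
    measure_setOf_closePoints_subset_union hμ.1 (Finset.mem_powerset.1 (Finset.mem_filter.1 h₁).1)
      (Finset.mem_powerset.1 (Finset.mem_filter.1 h₂).1) (Finset.mem_filter.1 h₁).2
      (Finset.mem_filter.1 h₂).2
  refine Finset.card_le_card_add_one_of_prime (𝒜 := 𝒜)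
    (fun A hA B hB => Finset.mem_filter.2 ⟨Finset.mem_powerset.2 (Finset.union_subset
      (Finset.mem_powerset.1 (Finset.mem_filter.1 hA).1)
      (Finset.mem_powerset.1 (Finset.mem_filter.1 hB).1)), (htight hA hB).1⟩)
    (fun T hT => Finset.mem_powerset.1 (Finset.mem_filter.1 hT).1) (fun T hT A hA B hB hTAB => ?_)
    fun T₁ h₁ T₂ h₂ hsig => ?_
  · by_contra! h
    refine (Finset.mem_filter.1 hT).2 (measure_mono_null (fun y (hy : closePoints t ε y = T) => ?_)
      (htight hA hB).2)
    exact ⟨show _ ⊆ A ∪ B from hy ▸ hTAB,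
      fun hy' => hy'.elim (fun hyA => h.1 (hy ▸ hyA)) fun hyB => h.2 (hy ▸ hyB)⟩
  · by_contra hne
    rcases hμ.measure_eq_zero_or_of_subset_preimage
      (measurableSet_closePoints_preimage_singleton t T₁ ε)
      (measurableSet_closePoints_preimage_singleton t T₂ ε)
      ((Set.disjoint_singleton.2 hne).preimage _) subset_rfl subset_rfl
      (fun S hS hS' => hsig S (Finset.mem_filter.2 ⟨hS, hS'⟩)) with h | h
    exacts [(Finset.mem_filter.1 h₁).2 h, (Finset.mem_filter.1 h₂).2 h]

theorem IsExtremePt.finitelySupported_of_prokDist_le [SecondCountableTopology X]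
    [IsFiniteMeasure μn] (ht : μn (↑t)ᶜ = 0) (hε : 0 ≤ ε)
    (hμ : IsExtremePt {ν : ProbabilityMeasure X | prokDist ν μn ≤ ε} μ) :
    FinitelySupported (#t + 1) (μ : Measure X) := by
  rw [setOf_prokDist_le_eq_prokhorovPolytope ht hε] at hμ
  choose y hy using hμ.exists_restrict_compl_singleton_eq_zero
  exact (finitelySupported_of_restrict_compl_singleton_eq_zero
    (fun x => ⟨_, Finset.mem_powerset.2 (closePoints_subset t ε x), rfl⟩)
    fun T _ => hy T).mono hμ.card_filter_measure_preimage_ne_zero_le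

end Prokhorov

theorem extremePt_prokhorov_ball_finitelySupported_general
    {Y : Type*} [MetricSpace Y] [PolishSpace Y] [MeasurableSpace Y] [BorelSpace Y]
    (s : Set Y) (n : ℕ)
    (μn : ProbabilityMeasure s) (hμn : FinitelySupported n (μn : Measure s))
    (ε : ℝ) (hε : 0 < ε) (μ : ProbabilityMeasure s)
    (hμ : IsExtremePt
      {μ' : ProbabilityMeasure s | prokDist (μ' : Measure s) (μn : Measure s) ≤ ε} μ) :
    FinitelySupported (n + 2) (μ : Measure s) := by
  obtain ⟨t, htn, ht⟩ := hμn
  exact (hμ.finitelySupported_of_prokDist_le ht hε.le).mono (by omega)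

/-- every extreme point of the closed Prokhorov ball of radius `ε` about
a measure supported on at most `n` points is supported on at most `n+2` points. -/
theorem extremePt_prokhorov_ball_finitelySupported
    {Y : Type*} [MetricSpace Y] [PolishSpace Y] [MeasurableSpace Y] [BorelSpace Y]
    (s : Set Y) (hs : MeasurableSet s) (n : ℕ)
    (μn : ProbabilityMeasure s) (hμn : FinitelySupported n (μn : Measure s))
    (ε : ℝ) (hε : 0 < ε) (μ : ProbabilityMeasure s)
    (hμ : IsExtremePt
      {μ' : ProbabilityMeasure s | prokDist (μ' : Measure s) (μn : Measure s) ≤ ε} μ) :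
    FinitelySupported (n + 2) (μ : Measure s) :=
  extremePt_prokhorov_ball_finitelySupported_general s n μn hμn ε hε μ hμ
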